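/- PU reweighting, deterministic bound: let p ∈ (0,1), ε ∈ (0,1/2), q ∈ (ε, 1−ε), and let (X'_1,Y'_1),…,(X'_n,Y'_n) be points of X×{−1,+1} with n'_+ = #{i : Y'_i = +1} satisfying 0 < n'_+ < n; set n'_− = n − n'_+. Define R̃_{w*,n}(g) = (2p/q)(1/n)Σ_{i:Y'_i=+1} 1{g(X'_i)=−1} + (1/(1−q))(1/n)Σ_{i:Y'_i=−1} 1{g(X'_i)=+1} and R̃_{ŵ*,n}(g) = (2p/n'_+)Σ_{i:Y'_i=+1} 1{g(X'_i)=−1} + (1/n'_−)Σ_{i:Y'_i=−1} 1{g(X'_i)=+1}. Then for every classifier g : X → {−1,+1}, |R̃_{ŵ*,n}(g) − R̃_{w*,n}(g)| ≤ (|n'_+/n − q|/ε²) · (2p + 1 + |n'_+/n − q| · (2p/(n'_+/n) + 1/(1 − n'_+/n))). -/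

import Mathlib

/-- Number of positive labels `n'₊` in the sample (labels encoded by `Bool`,
`true ↦ +1`, `false ↦ -1`). -/
def nPos {X : Type*} {n : ℕ} (ω : Fin n → X × Bool) : ℕ :=
  (Finset.univ.filter fun i => (ω i).2 = true).card

/-- `Σ_{i : Y'ᵢ = +1} 1{g(X'ᵢ) = -1}`. -/
noncomputable def posErr {X : Type*} {n : ℕ} (ω : Fin n → X × Bool) (g : X → Bool) : ℝ :=
  ∑ i, if (ω i).2 = true ∧ g (ω i).1 = false then (1:ℝ) else 0

/-- `Σ_{i : Y'ᵢ = -1} 1{g(X'ᵢ) = +1}`. -/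
noncomputable def negErr {X : Type*} {n : ℕ} (ω : Fin n → X × Bool) (g : X → Bool) : ℝ :=
  ∑ i, if (ω i).2 = false ∧ g (ω i).1 = true then (1:ℝ) else 0

/-!
With `q̂ = n'₊/n`, `A = posErr/n ≤ q̂` and `B = negErr/n ≤ 1 - q̂`, the difference of the two risks
is `2p·A·(q̂⁻¹ - q⁻¹) + B·((1 - q̂)⁻¹ - (1 - q)⁻¹)`. Since `A·|q̂⁻¹ - q⁻¹| ≤ |q̂ - q|/q` and
`q, 1 - q ≥ ε`, it is at most `(2p + 1)·|q̂ - q|/ε ≤ (2p + 1)·|q̂ - q|/ε²`; the term quadratic in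
`|q̂ - q|` in the bound is nonnegative slack.
-/

section Counting

variable {X : Type*} {n : ℕ} (ω : Fin n → X × Bool) (g : X → Bool)

lemma nPos_eq_sum : (nPos ω : ℝ) = ∑ i, if (ω i).2 = true then (1 : ℝ) else 0 :=
  Finset.natCast_card_filter _ _

lemma posErr_nonneg : 0 ≤ posErr ω g :=
  Finset.sum_nonneg fun _ _ => by split_ifs <;> norm_num

lemma negErr_nonneg : 0 ≤ negErr ω g :=
  Finset.sum_nonneg fun _ _ => by split_ifs <;> norm_num

lemma posErr_le_nPos : posErr ω g ≤ nPos ω := by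
  rw [nPos_eq_sum]
  refine Finset.sum_le_sum fun i _ => ?_
  split_ifs <;> simp_all

lemma negErr_le_sub_nPos : negErr ω g ≤ n - nPos ω :=
  calc negErr ω g ≤ ∑ i, (1 - if (ω i).2 = true then (1 : ℝ) else 0) := by
        refine Finset.sum_le_sum fun i _ => ?_
        split_ifs <;> simp_all
    _ = n - nPos ω := by simp [Finset.sum_sub_distrib, nPos_eq_sum]

end Counting

lemma plugin_risk_sub_ideal_risk {n m p q P N : ℝ} (hn : n ≠ 0) :
    (2 * p / m) * P + (1 / (n - m)) * N - ((2 * p / q) * (1 / n) * P + (1 / (1 - q)) * (1 / n) * N)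
      = 2 * p * (P / n) * ((m / n)⁻¹ - q⁻¹) + N / n * ((1 - m / n)⁻¹ - (1 - q)⁻¹) := by
  rw [inv_div, one_sub_div hn, inv_div]
  field_simp
  ring

lemma mul_abs_inv_sub_inv_le {a b c : ℝ} (ha : 0 < a) (hb : 0 < b) (hca : c ≤ a) :
    c * |a⁻¹ - b⁻¹| ≤ |a - b| / b := by
  rw [inv_sub_inv ha.ne' hb.ne', abs_div, abs_mul, abs_of_pos ha, abs_of_pos hb, abs_sub_comm]
  calc c * (|a - b| / (a * b)) = c / a * (|a - b| / b) := by ring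
    _ ≤ 1 * (|a - b| / b) := by gcongr; exact div_le_one_of_le₀ hca ha.le
    _ = |a - b| / b := one_mul _

lemma abs_weight_deviation_le {p ε q qhat A B : ℝ} (hp : 0 ≤ p) (hε : 0 < ε) (hεq : ε ≤ q)
    (hqε : q ≤ 1 - ε) (hqhat : qhat ∈ Set.Ioo 0 1) (hA : A ∈ Set.Icc 0 qhat)
    (hB : B ∈ Set.Icc 0 (1 - qhat)) :
    |2 * p * A * (qhat⁻¹ - q⁻¹) + B * ((1 - qhat)⁻¹ - (1 - q)⁻¹)|
      ≤ (2 * p + 1) * |qhat - q| / ε := by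
  have hq : 0 < q := hε.trans_le hεq
  have h1q : 0 < 1 - q := by linarith
  have h1qhat : 0 < 1 - qhat := sub_pos.2 hqhat.2
  calc _ ≤ 2 * p * (A * |qhat⁻¹ - q⁻¹|) + B * |(1 - qhat)⁻¹ - (1 - q)⁻¹| := by
        refine (abs_add_le _ _).trans (le_of_eq ?_)
        simp only [abs_mul, abs_of_nonneg hA.1, abs_of_nonneg hB.1, abs_two, abs_of_nonneg hp,
          mul_assoc]
    _ ≤ 2 * p * (|qhat - q| / q) + |(1 - qhat) - (1 - q)| / (1 - q) := by
        gcongr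
        · exact mul_abs_inv_sub_inv_le hqhat.1 hq hA.2
        · exact mul_abs_inv_sub_inv_le h1qhat h1q hB.2
    _ ≤ 2 * p * (|qhat - q| / ε) + |qhat - q| / ε := by
        rw [sub_sub_sub_cancel_left, abs_sub_comm q]
        gcongr
        linarith
    _ = (2 * p + 1) * |qhat - q| / ε := by ring

/-- deterministic bound on the deviation between the plug-in PU
weighted empirical risk and the ideally weighted one, valid for any fixed
sample containing both labeled-positive and unlabeled points. -/
theorem plugin_vs_ideal_pu_deterministic
    {X : Type*}
    (p ε q : ℝ) (hp : p ∈ Set.Ioo (0:ℝ) 1) (hε : ε ∈ Set.Ioo (0:ℝ) (1/2))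
    (hq : q ∈ Set.Ioo ε (1 - ε))
    (n : ℕ) (ω : Fin n → X × Bool)
    (hpos : 0 < nPos ω) (hlt : nPos ω < n)
    (g : X → Bool) :
    |((2 * p / (nPos ω : ℝ)) * posErr ω g +
        (1 / ((n : ℝ) - (nPos ω : ℝ))) * negErr ω g) -
      ((2 * p / q) * (1 / (n : ℝ)) * posErr ω g +
        (1 / (1 - q)) * (1 / (n : ℝ)) * negErr ω g)| ≤
    (|(nPos ω : ℝ) / n - q| / ε ^ 2) *
      (2 * p + 1 + |(nPos ω : ℝ) / n - q| *
        (2 * p / ((nPos ω : ℝ) / n) + 1 / (1 - (nPos ω : ℝ) / n))) := by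
  obtain ⟨hp0, -⟩ := hp
  obtain ⟨hε0, hε1⟩ := hε
  obtain ⟨hεq, hqε⟩ := hq
  have hm : (0 : ℝ) < nPos ω := by exact_mod_cast hpos
  have hmn : (nPos ω : ℝ) < n := by exact_mod_cast hlt
  have hn : (0 : ℝ) < n := hm.trans hmn
  have hA : posErr ω g / n ∈ Set.Icc 0 (nPos ω / n : ℝ) :=
    ⟨div_nonneg (posErr_nonneg ω g) hn.le, by gcongr; exact posErr_le_nPos ω g⟩
  have hB : negErr ω g / n ∈ Set.Icc 0 (1 - nPos ω / n : ℝ) :=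
    ⟨div_nonneg (negErr_nonneg ω g) hn.le, by
      rw [one_sub_div hn.ne']; gcongr; exact negErr_le_sub_nPos ω g⟩
  set qhat : ℝ := nPos ω / n
  set d := |qhat - q|
  have hqhat : qhat ∈ Set.Ioo 0 1 := ⟨div_pos hm hn, (div_lt_one hn).2 hmn⟩
  have hslack : 0 ≤ d / ε ^ 2 * (d * (2 * p / qhat + 1 / (1 - qhat))) := by
    have := sub_pos.2 hqhat.2
    positivity
  rw [plugin_risk_sub_ideal_risk hn.ne']
  calc _ ≤ (2 * p + 1) * d / ε :=
        abs_weight_deviation_le hp0.le hε0 hεq.le hqε.le hqhat hA hB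
    _ ≤ (2 * p + 1) * d / ε ^ 2 :=
        div_le_div_of_nonneg_left (by positivity) (by positivity) (by nlinarith)
    _ ≤ d / ε ^ 2 * (2 * p + 1 + d * (2 * p / qhat + 1 / (1 - qhat))) := by
        rw [mul_add]
        refine le_add_of_le_of_nonneg (le_of_eq (by ring)) hslack
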